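/- Let f : ℕ → ℕ. Suppose that for every domain X' and every binary concept class H ⊆ {0,1}^{X'} with finite VC dimension d, there exists an exact realizable sample compression scheme for H of size at most f(d). Then for every multiclass concept class C ⊆ Y^X with finite label set Y (|Y| ≥ 2) and finite graph dimension d_G, there exists an exact agnostic sample compression scheme for C (for the zero-one loss) of size at most f(d_G)·(1 + ⌈log₂ |Y|⌉). -/

import Mathlib

universe u v

/-- A finite sample `S` is realizable by the concept class `C`. -/
def Realizable {X Y : Type*} (C : Set (X → Y)) (S : List (X × Y)) : Prop :=
  ∃ c ∈ C, ∀ p ∈ S, c p.1 = p.2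

/-- `(κ, ρ)` is an exact realizable sample compression scheme for `C` of size at most `k`. -/
def IsExactRealizableScheme {X Y : Type*} (C : Set (X → Y)) (k : ℕ)
    (κ : List (X × Y) → List (X × Y) × List Bool)
    (ρ : List (X × Y) × List Bool → X → Y) : Prop :=
  (∀ S : List (X × Y), (κ S).1 ⊆ S) ∧
  (∀ S : List (X × Y), Realizable C S → (κ S).1.length + (κ S).2.length ≤ k) ∧
  (∀ S : List (X × Y), Realizable C S → ∀ p ∈ S, ρ (κ S) p.1 = p.2)

open Classical in
/-- The number of mistakes (zero-one loss count) of a predictor `g` on a sample `S`. -/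
noncomputable def errCount {X Y : Type*} (g : X → Y) (S : List (X × Y)) : ℕ :=
  S.countP fun p => decide (g p.1 ≠ p.2)

/-- `(κ, ρ)` is an exact agnostic sample compression scheme for `C` (zero-one loss) of
size at most `k`: on every finite sample, the reconstruction makes at most as many
mistakes as any concept of `C`. -/
def IsExactAgnosticScheme {X Y : Type*} (C : Set (X → Y)) (k : ℕ)
    (κ : List (X × Y) → List (X × Y) × List Bool)
    (ρ : List (X × Y) × List Bool → X → Y) : Prop :=
  (∀ S : List (X × Y), (κ S).1 ⊆ S) ∧
  (∀ S : List (X × Y), (κ S).1.length + (κ S).2.length ≤ k) ∧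
  (∀ S : List (X × Y), ∀ c ∈ C, errCount (ρ (κ S)) S ≤ errCount c S)

/-- `n` points of `X` are shattered by the binary concept class `H ⊆ {0,1}^X`. -/
def ShattersN {X : Type*} (H : Set (X → Bool)) (n : ℕ) : Prop :=
  ∃ x : Fin n → X, ∀ b : Fin n → Bool, ∃ h ∈ H, ∀ i, h (x i) = b i

/-- `H` has (finite) VC dimension exactly `d`. -/
def IsVCDim {X : Type*} (H : Set (X → Bool)) (d : ℕ) : Prop :=
  ShattersN H d ∧ ¬ ShattersN H (d + 1)

/-- `n` points of `X` are G-shattered by the multiclass concept class `C ⊆ Y^X`. -/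
def GShattersN {X Y : Type*} (C : Set (X → Y)) (n : ℕ) : Prop :=
  ∃ (x : Fin n → X) (y : Fin n → Y),
    ∀ b : Fin n → Bool, ∃ c ∈ C, ∀ i, (c (x i) = y i ↔ b i = true)

/-- `C` has (finite) graph dimension exactly `d`. -/
def IsGraphDim {X Y : Type*} (C : Set (X → Y)) (d : ℕ) : Prop :=
  GShattersN C d ∧ ¬ GShattersN C (d + 1)


/-!
Pass to the binary graph class `{(x, y) ↦ [c x = y] : c ∈ C}`, whose VC dimension is the graph
dimension of `C`. Given a sample `S`, let `c ∈ C` minimise the empirical error on `S`. At every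
point `(x, y) ∈ S` classified correctly by `c`, query all labels: the examples
`((x, y'), [y' = y])` form a binary sample realised by the graph of `c`, and the binary scheme
compresses it. Each retained example is transmitted as its source point `(x, y) ∈ S` together with
`⌈log₂ |Y|⌉` bits naming `y'`, which costs a factor `1 + ⌈log₂ |Y|⌉`. The reconstruction predicts
at `x` a label whose graph indicator is on; it is correct wherever `c` is, so it makes no more
mistakes than `c`, hence than any concept of `C`.
-/

open Function

theorem exists_list_map_eq_of_forall_mem {α β : Type*} {P : α → Prop} {f : α → β} {K : List β}
    (h : ∀ q ∈ K, ∃ r, P r ∧ f r = q) : ∃ L : List α, (∀ r ∈ L, P r) ∧ L.map f = K := by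
  induction K with
  | nil => exact ⟨[], by simp, rfl⟩
  | cons q K ih =>
    obtain ⟨r, hr, rfl⟩ := h q List.mem_cons_self
    obtain ⟨L, hL, rfl⟩ := ih fun q hq => h q (List.mem_cons_of_mem _ hq)
    exact ⟨r :: L, by simpa [hr] using hL, rfl⟩

section FixedLengthCode

variable {α β : Type*}

theorem exists_fixedLength_code_of_card_le_two_pow [Fintype β] [Nonempty β] {m : ℕ}
    (hm : Fintype.card β ≤ 2 ^ m) :
    ∃ (enc : β → List Bool) (dec : List Bool → β),
      (∀ b, (enc b).length = m) ∧ LeftInverse dec enc := by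
  obtain ⟨e⟩ : Nonempty (β ↪ (Fin m → Bool)) :=
    Function.Embedding.nonempty_of_card_le (by simpa using hm)
  have hinj : Injective fun b => List.ofFn (e b) := fun a b hab =>
    e.injective (List.ofFn_injective hab)
  exact ⟨_, invFun _, fun b => List.length_ofFn, leftInverse_invFun hinj⟩

theorem length_flatten_map_of_length_eq {m : ℕ} {enc : β → List Bool}
    (hlen : ∀ b, (enc b).length = m) (l : List β) : (l.map enc).flatten.length = l.length * m := by
  rw [List.length_flatten, List.map_map, show List.length ∘ enc = fun _ => m from funext hlen]
  simp

def zipDecodedLabels (m : ℕ) (dec : List Bool → β) :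
    List α → List Bool → List (α × β) × List Bool
  | [], bits => ([], bits)
  | a :: as, bits =>
    let rest := zipDecodedLabels m dec as (bits.drop m)
    ((a, dec (bits.take m)) :: rest.1, rest.2)

theorem zipDecodedLabels_map_fst_flatten {m : ℕ} {enc : β → List Bool} {dec : List Bool → β}
    (hlen : ∀ b, (enc b).length = m) (hdec : LeftInverse dec enc) (L : List (α × β))
    (bits : List Bool) :
    zipDecodedLabels m dec (L.map Prod.fst) ((L.map (enc ∘ Prod.snd)).flatten ++ bits) =
      (L, bits) := by
  induction L with
  | nil => rfl
  | cons r L ih =>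
    simp [zipDecodedLabels, List.take_left' (hlen r.2), List.drop_left' (hlen r.2), hdec r.2, ih]

end FixedLengthCode

section GraphClass

variable {X Y : Type*}

def graphClass [DecidableEq Y] (C : Set (X → Y)) : Set (X × Y → Bool) :=
  (fun c p => decide (c p.1 = p.2)) '' C

theorem shattersN_graphClass_iff [DecidableEq Y] {C : Set (X → Y)} {n : ℕ} :
    ShattersN (graphClass C) n ↔ GShattersN C n := by
  constructor
  · rintro ⟨x, hx⟩
    refine ⟨fun i => (x i).1, fun i => (x i).2, fun b => ?_⟩
    obtain ⟨_, ⟨c, hc, rfl⟩, hcb⟩ := hx b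
    exact ⟨c, hc, fun i => by simp [← hcb i]⟩
  · rintro ⟨x, y, hxy⟩
    refine ⟨fun i => (x i, y i), fun b => ?_⟩
    obtain ⟨c, hc, hcb⟩ := hxy b
    exact ⟨_, ⟨c, hc, rfl⟩, fun i => by simp [hcb i]⟩

theorem isVCDim_graphClass_iff [DecidableEq Y] {C : Set (X → Y)} {d : ℕ} :
    IsVCDim (graphClass C) d ↔ IsGraphDim C d := by
  simp only [IsVCDim, IsGraphDim, shattersN_graphClass_iff]

theorem GShattersN.nonempty {C : Set (X → Y)} {n : ℕ} (h : GShattersN C n) : C.Nonempty := by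
  obtain ⟨x, y, hxy⟩ := h
  obtain ⟨c, hc, -⟩ := hxy fun _ => true
  exact ⟨c, hc⟩

def relabel [DecidableEq Y] (p : X × Y) (y : Y) : (X × Y) × Bool :=
  ((p.1, y), decide (y = p.2))

noncomputable def graphSample [DecidableEq Y] [Fintype Y] (c : X → Y) (S : List (X × Y)) :
    List ((X × Y) × Bool) :=
  (S.filter fun p => c p.1 = p.2).flatMap fun p => Finset.univ.toList.map (relabel p)

theorem mem_graphSample [DecidableEq Y] [Fintype Y] {c : X → Y} {S : List (X × Y)}
    {q : (X × Y) × Bool} :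
    q ∈ graphSample c S ↔ ∃ p ∈ S, c p.1 = p.2 ∧ ∃ y, relabel p y = q := by
  simp [graphSample, and_assoc]

theorem realizable_graphSample [DecidableEq Y] [Fintype Y] {C : Set (X → Y)} {c : X → Y}
    (hc : c ∈ C) (S : List (X × Y)) : Realizable (graphClass C) (graphSample c S) := by
  refine ⟨_, ⟨c, hc, rfl⟩, fun q hq => ?_⟩
  obtain ⟨p, -, hcp, y, rfl⟩ := mem_graphSample.1 hq
  simp [relabel, hcp, eq_comm]

def decodeRelabelled [DecidableEq Y] (m : ℕ) (dec : List Bool → Y)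
    (B : List (X × Y) × List Bool) : List ((X × Y) × Bool) × List Bool :=
  let D := zipDecodedLabels m dec B.1 B.2
  (D.1.map (uncurry relabel), D.2)

theorem exists_decodeRelabelled_eq [DecidableEq Y] {m : ℕ} {enc : Y → List Bool}
    {dec : List Bool → Y} (hlen : ∀ y, (enc y).length = m) (hdec : LeftInverse dec enc)
    {S : List (X × Y)} {K : List ((X × Y) × Bool)} (hK : ∀ q ∈ K, ∃ p ∈ S, ∃ y, relabel p y = q)
    (bits : List Bool) :
    ∃ B : List (X × Y) × List Bool, B.1 ⊆ S ∧
      B.1.length + B.2.length = K.length * (1 + m) + bits.length ∧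
      decodeRelabelled m dec B = (K, bits) := by
  obtain ⟨L, hLS, rfl⟩ := exists_list_map_eq_of_forall_mem (P := fun r => r.1 ∈ S)
    (f := uncurry relabel) fun q hq => by
      obtain ⟨p, hp, y, rfl⟩ := hK q hq
      exact ⟨(p, y), hp, rfl⟩
  refine ⟨(L.map Prod.fst, (L.map (enc ∘ Prod.snd)).flatten ++ bits), ?_, ?_, ?_⟩
  · intro p hp
    obtain ⟨r, hr, rfl⟩ := List.mem_map.1 hp
    exact hLS r hr
  · rw [List.length_append, ← List.map_map, length_flatten_map_of_length_eq hlen]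
    simp only [List.length_map]
    ring
  · simp [decodeRelabelled, zipDecodedLabels_map_fst_flatten hlen hdec]

open Classical in
noncomputable def graphDecode [Nonempty Y] (h : X × Y → Bool) (x : X) : Y :=
  if hx : ∃ y, h (x, y) = true then hx.choose else Classical.arbitrary Y

theorem graphDecode_eq [Nonempty Y] {h : X × Y → Bool} {x : X} {y : Y}
    (hxy : ∀ y', h (x, y') = true ↔ y' = y) : graphDecode h x = y := by
  have hex : ∃ y', h (x, y') = true := ⟨y, (hxy y).2 rfl⟩
  rw [graphDecode, dif_pos hex]
  exact (hxy _).1 hex.choose_spec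

end GraphClass

section EmpiricalRisk

variable {X Y : Type*}

theorem errCount_le_of_forall_imp {g c : X → Y} {S : List (X × Y)}
    (h : ∀ p ∈ S, c p.1 = p.2 → g p.1 = p.2) : errCount g S ≤ errCount c S :=
  List.countP_mono_left fun p hp => by simpa using mt (h p hp)

theorem exists_errCount_minimizer {C : Set (X → Y)} (hC : C.Nonempty) (S : List (X × Y)) :
    ∃ c ∈ C, ∀ c' ∈ C, errCount c S ≤ errCount c' S :=
  ⟨argminOn (errCount · S) C hC, argminOn_mem _ C hC,
    fun _ hc' => argminOn_le (errCount · S) C hc'⟩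

end EmpiricalRisk

theorem exists_agnosticScheme_of_realizableScheme_graphClass {X Y : Type*} [Fintype Y]
    [Nonempty Y] [DecidableEq Y] {C : Set (X → Y)} (hC : C.Nonempty) {k m : ℕ}
    (hm : Fintype.card Y ≤ 2 ^ m) {κ₀ : List ((X × Y) × Bool) → List ((X × Y) × Bool) × List Bool}
    {ρ₀ : List ((X × Y) × Bool) × List Bool → X × Y → Bool}
    (h₀ : IsExactRealizableScheme (graphClass C) k κ₀ ρ₀) :
    ∃ κ ρ, IsExactAgnosticScheme C (k * (1 + m)) κ ρ := by
  obtain ⟨hsub₀, hsize₀, hcorrect₀⟩ := h₀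
  obtain ⟨enc, dec, hlen, hdec⟩ := exists_fixedLength_code_of_card_le_two_pow hm
  choose erm herm_mem herm_le using exists_errCount_minimizer hC
  have hencode : ∀ S, ∃ B : List (X × Y) × List Bool, B.1 ⊆ S ∧
      B.1.length + B.2.length ≤ k * (1 + m) ∧
      decodeRelabelled m dec B = κ₀ (graphSample (erm S) S) := by
    intro S
    have hreal := realizable_graphSample (herm_mem S) S
    obtain ⟨B, hBS, hBlen, hBdec⟩ := exists_decodeRelabelled_eq hlen hdec (S := S)
      (fun q hq => by
        obtain ⟨p, hp, -, y, rfl⟩ := mem_graphSample.1 (hsub₀ _ hq)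
        exact ⟨p, hp, y, rfl⟩)
      (κ₀ (graphSample (erm S) S)).2
    refine ⟨B, hBS, ?_, hBdec⟩
    grw [hBlen, ← hsize₀ _ hreal]
    ring_nf
    omega
  choose κ hκ_sub hκ_size hκ_decode using hencode
  refine ⟨κ, fun B => graphDecode (ρ₀ (decodeRelabelled m dec B)), hκ_sub, hκ_size,
    fun S c hc => ?_⟩
  calc errCount (graphDecode (ρ₀ (decodeRelabelled m dec (κ S)))) S
      ≤ errCount (erm S) S := errCount_le_of_forall_imp fun p hp hcp => by
        rw [hκ_decode]
        refine graphDecode_eq fun y => ?_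
        have hquery : ρ₀ (κ₀ (graphSample (erm S) S)) (p.1, y) = decide (y = p.2) :=
          hcorrect₀ _ (realizable_graphSample (herm_mem S) S) _
            (mem_graphSample.2 ⟨p, hp, hcp, y, rfl⟩)
        rw [hquery, decide_eq_true_iff]
    _ ≤ errCount c S := herm_le S c hc

/-- Reducing agnostic multiclass compression to binary compression: if every binary
class of finite VC dimension `d` has an exact realizable compression scheme of size at
most `f d`, then every multiclass class with finite label set `Y` (`|Y| ≥ 2`) and finite
graph dimension `d_G` has an exact agnostic compression scheme (zero-one loss) of size
at most `f d_G * (1 + ⌈log₂ |Y|⌉)`. -/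
theorem multiclass_agnostic_compression_of_binary {X : Type u} {Y : Type v} [Fintype Y]
    (hY : 2 ≤ Fintype.card Y) (f : ℕ → ℕ)
    (hbin : ∀ (X' : Type (max u v)) (H : Set (X' → Bool)) (d : ℕ), IsVCDim H d →
      ∃ κ ρ, IsExactRealizableScheme H (f d) κ ρ)
    (C : Set (X → Y)) (dG : ℕ) (hC : IsGraphDim C dG) :
    ∃ κ ρ, IsExactAgnosticScheme C (f dG * (1 + Nat.clog 2 (Fintype.card Y))) κ ρ := by
  classical
  have : Nonempty Y := Fintype.card_pos_iff.mp (by omega)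
  obtain ⟨κ₀, ρ₀, h₀⟩ := hbin (X × Y) (graphClass C) dG (isVCDim_graphClass_iff.2 hC)
  exact exists_agnosticScheme_of_realizableScheme_graphClass hC.1.nonempty
    (Nat.le_pow_clog one_lt_two _) h₀
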